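/- Let P_1, ..., P_N be positive semidefinite operators on a finite-dimensional complex Hilbert space H, and let π_1, ..., π_N be mutually orthogonal permutations of {1, ..., N}. Then ‖∑_{i=1}^N P_i‖ ≤ ∑_{j=1}^N max_{1 ≤ i ≤ N} ‖√(P_i) · √(P_{π_j(i)})‖, where ‖·‖ is the operator norm and √ denotes the positive semidefinite square root. -/
import Mathlib


set_option synthInstance.maxHeartbeats 1000000
set_option maxHeartbeats 2000000

open scoped InnerProductSpace ComplexConjugate
/-- For positive semidefinite operators `P 1, …, P N` on a finite-dimensional
complex Hilbert space `H` and mutually orthogonal permutations `π 1, …, π N` of `{1, …, N}`,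
the operator norm of `∑ i, P i` is bounded by `∑ j, max_i ‖√(P i) * √(P (π j i))‖`.
Here `CFC.sqrt` is the positive semidefinite square root. -/
theorem norm_sum_le_sum_max_norm_sqrt_mul_sqrt
    {H : Type*} [NormedAddCommGroup H] [InnerProductSpace ℂ H] [FiniteDimensional ℂ H]
    {N : ℕ} (P : Fin N → (H →L[ℂ] H)) (hP : ∀ i, (P i).IsPositive)
    (π : Fin N → Equiv.Perm (Fin N))
    (hπ : ∀ i j, i ≠ j → ∀ s, π i s ≠ π j s) :
    ‖∑ i, P i‖ ≤ ∑ j, ⨆ i, ‖CFC.sqrt (P i) * CFC.sqrt (P (π j i))‖ := by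
  rcases Nat.eq_zero_or_pos N with hN | hN
  · subst hN; simp
  have : Nonempty (Fin N) := ⟨⟨0, hN⟩⟩
  set Q : Fin N → (H →L[ℂ] H) := fun i => CFC.sqrt (P i) with hQ
  have hPpos : ∀ i, 0 ≤ P i := fun i =>
    (ContinuousLinearMap.nonneg_iff_isPositive _).2 (hP i)
  have hQQ : ∀ i, Q i * Q i = P i := fun i => CFC.sqrt_mul_sqrt_self (P i) (hPpos i)
  have hQsa : ∀ i, IsSelfAdjoint (Q i) := fun i => (CFC.sqrt_nonneg (a := P i)).isSelfAdjoint
  -- symmetric property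
  have hQsymm : ∀ i (x y : H), ⟪Q i x, y⟫_ℂ = ⟪x, Q i y⟫_ℂ := fun i x y =>
    ((ContinuousLinearMap.isSelfAdjoint_iff_isSymmetric).1 (hQsa i)) x y
  set C : Fin N → ℝ := fun j => ⨆ i, ‖Q i * Q (π j i)‖ with hC
  have hCb : ∀ j, BddAbove (Set.range fun i => ‖Q i * Q (π j i)‖) := fun j =>
    Set.Finite.bddAbove (Set.finite_range _)
  have hCle : ∀ j i, ‖Q i * Q (π j i)‖ ≤ C j := fun j i => le_ciSup (hCb j) i
  have hC0 : ∀ j, 0 ≤ C j := fun j => le_trans (norm_nonneg _) (hCle j ⟨0, hN⟩)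
  set S : H →L[ℂ] H := ∑ i, P i with hS
  refine ContinuousLinearMap.opNorm_le_bound _ (Finset.sum_nonneg fun j _ => hC0 j) fun x => ?_
  -- key bound: ‖S x‖^2 ≤ (∑ j, C j) * (re ⟪S x, x⟫)
  have hbij : ∀ i : Fin N, Function.Bijective (fun j => π j i) := by
    intro i
    refine Finite.injective_iff_bijective.1 fun a b hab => ?_
    by_contra h
    exact hπ a b h i hab
  have key : ‖S x‖ ^ 2 ≤ (∑ j, C j) * RCLike.re ⟪S x, x⟫_ℂ := by
    have h1 : ‖S x‖ ^ 2 = ∑ i, ∑ k, RCLike.re ⟪P i x, P k x⟫_ℂ := by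
      rw [← inner_self_eq_norm_sq (𝕜 := ℂ)]
      simp only [hS, ContinuousLinearMap.sum_apply, sum_inner, inner_sum, map_sum]
      rw [Finset.sum_comm]
    rw [h1]
    have h2 : ∀ i k, RCLike.re ⟪P i x, P k x⟫_ℂ ≤ ‖Q k * Q i‖ * (‖Q i x‖ * ‖Q k x‖) := by
      intro i k
      have : ⟪P i x, P k x⟫_ℂ = ⟪(Q k * Q i) (Q i x), Q k x⟫_ℂ := by
        rw [← hQQ i, ← hQQ k]
        simp only [ContinuousLinearMap.mul_apply]
        rw [← hQsymm k]
      calc RCLike.re ⟪P i x, P k x⟫_ℂ ≤ ‖⟪P i x, P k x⟫_ℂ‖ := RCLike.re_le_norm _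
        _ = ‖⟪(Q k * Q i) (Q i x), Q k x⟫_ℂ‖ := by rw [this]
        _ ≤ ‖(Q k * Q i) (Q i x)‖ * ‖Q k x‖ := norm_inner_le_norm _ _
        _ ≤ ‖Q k * Q i‖ * ‖Q i x‖ * ‖Q k x‖ := by
            gcongr; exact (Q k * Q i).le_opNorm _
        _ = ‖Q k * Q i‖ * (‖Q i x‖ * ‖Q k x‖) := by ring
    have hnorm_comm : ∀ i k, ‖Q k * Q i‖ = ‖Q i * Q k‖ := by
      intro i k
      conv_lhs => rw [← norm_star (Q k * Q i)]
      rw [star_mul, (hQsa i).star_eq, (hQsa k).star_eq]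
    calc ∑ i, ∑ k, RCLike.re ⟪P i x, P k x⟫_ℂ
        = ∑ i, ∑ j, RCLike.re ⟪P i x, P (π j i) x⟫_ℂ := by
          refine Finset.sum_congr rfl fun i _ => ?_
          exact (Fintype.sum_bijective _ (hbij i) _ _ fun j => rfl).symm
      _ ≤ ∑ i, ∑ j, C j * (‖Q i x‖ * ‖Q (π j i) x‖) := by
          refine Finset.sum_le_sum fun i _ => Finset.sum_le_sum fun j _ => ?_
          refine le_trans (h2 i (π j i)) ?_
          have := hCle j i
          rw [hnorm_comm i (π j i)]
          exact mul_le_mul_of_nonneg_right this (by positivity)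
      _ = ∑ j, C j * ∑ i, ‖Q i x‖ * ‖Q (π j i) x‖ := by
          rw [Finset.sum_comm]
          exact Finset.sum_congr rfl fun j _ => (Finset.mul_sum _ _ _).symm
      _ ≤ ∑ j, C j * ∑ i, ‖Q i x‖ ^ 2 := by
          refine Finset.sum_le_sum fun j _ => ?_
          refine mul_le_mul_of_nonneg_left ?_ (hC0 j)
          have hcs := Finset.sum_mul_sq_le_sq_mul_sq Finset.univ
            (fun i => ‖Q i x‖) (fun i => ‖Q (π j i) x‖)
          have hperm : ∑ i, ‖Q (π j i) x‖ ^ 2 = ∑ i, ‖Q i x‖ ^ 2 :=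
            Equiv.sum_comp (π j) fun i => ‖Q i x‖ ^ 2
          rw [hperm] at hcs
          have h0 : (0:ℝ) ≤ ∑ i, ‖Q i x‖ ^ 2 := Finset.sum_nonneg fun i _ => sq_nonneg _
          nlinarith [Finset.sum_nonneg (s := (Finset.univ : Finset (Fin N)))
            (f := fun i => ‖Q i x‖ * ‖Q (π j i) x‖)
            (fun i _ => mul_nonneg (norm_nonneg _) (norm_nonneg _))]
      _ = (∑ j, C j) * ∑ i, ‖Q i x‖ ^ 2 := by rw [← Finset.sum_mul]
      _ = (∑ j, C j) * RCLike.re ⟪S x, x⟫_ℂ := by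
          congr 1
          simp only [hS, ContinuousLinearMap.sum_apply, sum_inner, map_sum]
          refine Finset.sum_congr rfl fun i _ => ?_
          have hi : ⟪(P i) x, x⟫_ℂ = ⟪Q i x, Q i x⟫_ℂ := by
            rw [← hQQ i]
            simp only [ContinuousLinearMap.mul_apply]
            rw [hQsymm i]
          rw [hi, ← inner_self_eq_norm_sq (𝕜 := ℂ)]
  have h3 : RCLike.re ⟪S x, x⟫_ℂ ≤ ‖S x‖ * ‖x‖ := re_inner_le_norm _ _
  have hCsum : 0 ≤ ∑ j, C j := Finset.sum_nonneg fun j _ => hC0 j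
  rcases eq_or_lt_of_le (norm_nonneg (S x)) with h0 | h0
  · rw [← h0]; positivity
  · have : ‖S x‖ ^ 2 ≤ (∑ j, C j) * (‖S x‖ * ‖x‖) :=
      key.trans (mul_le_mul_of_nonneg_left h3 hCsum)
    nlinarith
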